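/- arXiv:2104.01957 — 3 statements merged into one kernel-verified Lean document; each statement's English description precedes it below -/
import Mathlib

section
/- Let P ⊂ ℝ^d be a convex body (compact convex with nonempty interior), let α ∈ ℂ \ {0}, and suppose S_ℂ(α) ⊆ N(P). Fix any ξ ∈ S_ℂ(α) and define f(x) := exp(−2πi⟨x,ξ⟩) for x ∈ ℝ^d. Then f is a continuous function that is not identically zero, and ∫_{σ(P)} f(x) dx = 0 for every rigid motion σ of ℝ^d. In particular, P does not have the Pompeiu property. -/
open MeasureTheory Real

/-- The Fourier–Laplace transform of a set `P ⊆ ℝ^d`, evaluated at `z ∈ ℂ^d`: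
`∫_P exp(−2πi⟨x,z⟩) dx` with the bilinear pairing `⟨x,z⟩ = ∑ xⱼ zⱼ`. -/
noncomputable def fourierLaplace (d : ℕ) (P : Set (Fin d → ℝ)) (z : Fin d → ℂ) : ℂ :=
  ∫ x in P, Complex.exp (-2 * Real.pi * Complex.I * ∑ j, (x j : ℂ) * z j)

/-- A set `P ⊆ ℝ^d` has the Pompeiu property if the only continuous function
`f : ℝ^d → ℂ` whose integral over every rigid-motion image `σ(P) = A(P) + b`
(with `A ∈ SO(d,ℝ)`, `b ∈ ℝ^d`) vanishes, is the zero function. -/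
def HasPompeiuProperty (d : ℕ) (P : Set (Fin d → ℝ)) : Prop :=
  ∀ f : (Fin d → ℝ) → ℂ, Continuous f →
    (∀ (A : Matrix (Fin d) (Fin d) ℝ) (b : Fin d → ℝ),
      A.transpose * A = 1 → A.det = 1 →
      ∫ x in (fun x => A.mulVec x + b) '' P, f x = 0) →
    ∀ x, f x = 0

theorem variety_in_null_set_implies_not_pompeiu
    (d : ℕ) (P : Set (Fin d → ℝ)) (hPc : IsCompact P) (hPconv : Convex ℝ P)
    (hdim : (interior P).Nonempty)
    (α : ℂ) (hα : α ≠ 0)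
    (hsub : {z : Fin d → ℂ | ∑ j, z j ^ 2 = α ^ 2} ⊆
      {z : Fin d → ℂ | fourierLaplace d P z = 0})
    (ξ : Fin d → ℂ) (hξ : ∑ j, ξ j ^ 2 = α ^ 2)
    (f : (Fin d → ℝ) → ℂ)
    (hf : f = fun x => Complex.exp (-2 * Real.pi * Complex.I * ∑ j, (x j : ℂ) * ξ j)) :
    Continuous f ∧ (∃ x, f x ≠ 0) ∧
    (∀ (A : Matrix (Fin d) (Fin d) ℝ) (b : Fin d → ℝ),
      A.transpose * A = 1 → A.det = 1 →
      ∫ x in (fun x => A.mulVec x + b) '' P, f x = 0) ∧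
    ¬ HasPompeiuProperty d P := by
  subst hf
  have hcont : Continuous fun x : Fin d → ℝ =>
      Complex.exp (-2 * Real.pi * Complex.I * ∑ j, (x j : ℂ) * ξ j) := by fun_prop
  have hne : ∃ x : Fin d → ℝ,
      Complex.exp (-2 * Real.pi * Complex.I * ∑ j, (x j : ℂ) * ξ j) ≠ 0 :=
    ⟨0, Complex.exp_ne_zero _⟩
  have hint : ∀ (A : Matrix (Fin d) (Fin d) ℝ) (b : Fin d → ℝ),
      A.transpose * A = 1 → A.det = 1 →
      ∫ x in (fun x => A.mulVec x + b) '' P,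
        Complex.exp (-2 * Real.pi * Complex.I * ∑ j, (x j : ℂ) * ξ j) = 0 := by
    intro A b hAo hAdet
    -- the transported frequency
    set η : Fin d → ℂ := fun k => ∑ j, (A j k : ℂ) * ξ j with hη
    have hηsphere : ∑ k, η k ^ 2 = α ^ 2 := by
      have hAAt : A * A.transpose = 1 := mul_eq_one_comm.mp hAo
      calc ∑ k, η k ^ 2
          = ∑ k, (∑ j, (A j k : ℂ) * ξ j) * (∑ j', (A j' k : ℂ) * ξ j') := by
            simp [hη, sq]
        _ = ∑ j, ∑ j', (∑ k, (A j k : ℂ) * (A j' k : ℂ)) * (ξ j * ξ j') := by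
            simp_rw [Finset.sum_mul, Finset.mul_sum]
            rw [Finset.sum_comm]
            refine Finset.sum_congr rfl fun j _ => ?_
            rw [Finset.sum_comm]
            refine Finset.sum_congr rfl fun j' _ => ?_
            refine Finset.sum_congr rfl fun k _ => ?_
            ring
        _ = ∑ j, ∑ j', (((A * A.transpose) j j' : ℝ) : ℂ) * (ξ j * ξ j') := by
            refine Finset.sum_congr rfl fun j _ => Finset.sum_congr rfl fun j' _ => ?_
            simp [Matrix.mul_apply, Matrix.transpose_apply]
        _ = ∑ j, ξ j ^ 2 := by
            rw [hAAt]
            refine Finset.sum_congr rfl fun j _ => ?_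
            rw [Finset.sum_eq_single j]
            · simp [Matrix.one_apply, sq]
            · intro j' _ hj'; simp [Matrix.one_apply, Ne.symm hj']
            · simp
        _ = α ^ 2 := hξ
    have hFL : fourierLaplace d P η = 0 := hsub hηsphere
    -- change of variables
    set L : (Fin d → ℝ) →L[ℝ] (Fin d → ℝ) :=
      LinearMap.toContinuousLinearMap (Matrix.toLin' A) with hL
    have hLdet : L.det = 1 := by
      rw [ContinuousLinearMap.det, hL, LinearMap.coe_toContinuousLinearMap,
        LinearMap.det_toLin', hAdet]
    have hderiv : ∀ x ∈ P, HasFDerivWithinAt (fun x => A.mulVec x + b) L P x := by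
      intro x hx
      have : HasFDerivAt (fun x => L x + b) L x := (L.hasFDerivAt).add_const b
      exact (this.congr_fderiv rfl).hasFDerivWithinAt.congr
        (fun y _ => by simp [hL, Matrix.toLin'_apply]) (by simp [hL, Matrix.toLin'_apply])
    have hinj : Set.InjOn (fun x => A.mulVec x + b) P := by
      intro x _ y _ hxy
      have h1 : A.mulVec x = A.mulVec y := by
        have := hxy; simpa using add_right_cancel this
      have h2 : (A.transpose * A).mulVec x = (A.transpose * A).mulVec y := by
        rw [← Matrix.mulVec_mulVec, ← Matrix.mulVec_mulVec, h1]
      simpa [hAo] using h2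
    rw [integral_image_eq_integral_abs_det_fderiv_smul volume hPc.measurableSet
      hderiv hinj]
    have key : ∀ x : Fin d → ℝ,
        Complex.exp (-2 * Real.pi * Complex.I * ∑ j, ((A.mulVec x + b) j : ℂ) * ξ j)
        = Complex.exp (-2 * Real.pi * Complex.I * ∑ j, (b j : ℂ) * ξ j)
          * Complex.exp (-2 * Real.pi * Complex.I * ∑ k, (x k : ℂ) * η k) := by
      intro x
      rw [← Complex.exp_add]
      congr 1
      have hsum : ∑ j, ((A.mulVec x + b) j : ℂ) * ξ j
          = (∑ j, (b j : ℂ) * ξ j) + ∑ k, (x k : ℂ) * η k := by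
        have : ∑ j, ((A.mulVec x + b) j : ℂ) * ξ j
            = (∑ j, ((A.mulVec x) j : ℂ) * ξ j) + ∑ j, (b j : ℂ) * ξ j := by
          rw [← Finset.sum_add_distrib]
          refine Finset.sum_congr rfl fun j _ => ?_
          push_cast [Pi.add_apply]
          ring
        rw [this, add_comm]
        congr 1
        calc ∑ j, ((A.mulVec x) j : ℂ) * ξ j
            = ∑ j, ∑ k, ((A j k : ℂ) * (x k : ℂ)) * ξ j := by
              refine Finset.sum_congr rfl fun j _ => ?_
              simp [Matrix.mulVec, dotProduct, Finset.sum_mul]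
          _ = ∑ k, (x k : ℂ) * η k := by
              rw [Finset.sum_comm]
              refine Finset.sum_congr rfl fun k _ => ?_
              simp only [hη, Finset.mul_sum]
              exact Finset.sum_congr rfl fun j _ => by ring
      rw [hsum]; ring
    simp only [hLdet, abs_one, one_smul, key]
    rw [integral_const_mul]
    have : ∫ x in P, Complex.exp (-2 * Real.pi * Complex.I * ∑ k, (x k : ℂ) * η k) = 0 :=
      hFL
    rw [this, mul_zero]
  refine ⟨hcont, hne, hint, ?_⟩
  intro hP
  obtain ⟨x, hx⟩ := hne
  exact hx (hP _ hcont hint x)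
end

section
/- Let v ∈ ℝ^d, let w₁, …, w_d ∈ ℝ^d be linearly independent, and let K := {v + λ₁w₁ + ⋯ + λ_d w_d : λ₁, …, λ_d ≥ 0} be the simplicial cone they generate with apex v. Let z ∈ ℂ^d satisfy Im⟨w_j, z⟩ < 0 for every j = 1, …, d (equivalently, Im⟨ξ − v, z⟩ < 0 for all ξ ∈ K \ {v}). Then the function ξ ↦ exp(−2πi⟨ξ,z⟩) is Lebesgue integrable on K and ∫_K exp(−2πi⟨ξ,z⟩) dξ = (exp(−2πi⟨v,z⟩)/(2πi)^d) · |det(w₁, …, w_d)| / (⟨w₁,z⟩ ⋯ ⟨w_d,z⟩), where det(w₁, …, w_d) is the determinant of the matrix with columns w₁, …, w_d. -/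
open MeasureTheory Real Set

lemma cexp_integrableOn_Ioi_aux {c : ℂ} (hc : c.re < 0) :
    IntegrableOn (fun t : ℝ => Complex.exp (c * t)) (Set.Ioi 0) := by
  have hb : (0:ℝ) < -c.re := by linarith
  refine Integrable.mono' (exp_neg_integrableOn_Ioi 0 hb) ?_ ?_
  · exact (Complex.continuous_exp.comp (by continuity)).aestronglyMeasurable
  · filter_upwards with t
    simp only [Complex.norm_exp]
    have : (c * (t:ℂ)).re = c.re * t := by simp [Complex.mul_re]
    rw [this]
    simp [neg_mul]

lemma integral_cexp_Ioi_aux {c : ℂ} (hc : c.re < 0) :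
    ∫ t in Set.Ioi (0:ℝ), Complex.exp (c * t) = -c⁻¹ := by
  have hc0 : c ≠ 0 := fun h => by simp [h] at hc
  have D : ∀ t : ℝ, HasDerivAt (fun y : ℝ => c⁻¹ * Complex.exp (c * y))
      (Complex.exp (c * t)) t := by
    intro t
    have h1 : HasDerivAt (fun y : ℝ => Complex.exp (c * y)) (Complex.exp (c * t) * c) t := by
      apply (Complex.hasDerivAt_exp _).comp t
      simpa only [mul_one, id_eq] using ((hasDerivAt_id (t : ℂ)).const_mul c).comp_ofReal
    have h2 := h1.const_mul c⁻¹
    rwa [mul_comm (Complex.exp _) c, ← mul_assoc, inv_mul_cancel₀ hc0, one_mul] at h2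
  have htend : Filter.Tendsto (fun y : ℝ => c⁻¹ * Complex.exp (c * y)) Filter.atTop (nhds 0) := by
    rw [tendsto_zero_iff_norm_tendsto_zero]
    have : ∀ y : ℝ, ‖c⁻¹ * Complex.exp (c * y)‖ = ‖c⁻¹‖ * Real.exp (c.re * y) := by
      intro y
      simp [Complex.norm_exp, Complex.mul_re]
    simp only [this]
    rw [← mul_zero ‖c⁻¹‖]
    apply Filter.Tendsto.const_mul
    have : Filter.Tendsto (fun y : ℝ => c.re * y) Filter.atTop Filter.atBot :=
      Filter.Tendsto.const_mul_atTop_of_neg hc Filter.tendsto_id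
    exact Real.tendsto_exp_atBot.comp this
  have := integral_Ioi_of_hasDerivAt_of_tendsto
    (f := fun y : ℝ => c⁻¹ * Complex.exp (c * y))
    (f' := fun y : ℝ => Complex.exp (c * y)) (a := 0) (m := 0)
    (D 0).continuousAt.continuousWithinAt (fun x _ => D x)
    (cexp_integrableOn_Ioi_aux hc) htend
  simpa using this

theorem fourierLaplace_simplicial_cone
    (d : ℕ) (v : Fin d → ℝ) (w : Fin d → (Fin d → ℝ))
    (hw : LinearIndependent ℝ w)
    (K : Set (Fin d → ℝ))
    (hK : K = {x | ∃ lam : Fin d → ℝ, (∀ j, 0 ≤ lam j) ∧ x = v + ∑ j, lam j • w j})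
    (z : Fin d → ℂ)
    (hz : ∀ j, (∑ i, (w j i : ℂ) * z i).im < 0) :
    IntegrableOn
      (fun ξ : Fin d → ℝ =>
        Complex.exp (-2 * Real.pi * Complex.I * ∑ i, (ξ i : ℂ) * z i)) K volume ∧
    ∫ ξ in K, Complex.exp (-2 * Real.pi * Complex.I * ∑ i, (ξ i : ℂ) * z i)
      = (Complex.exp (-2 * Real.pi * Complex.I * ∑ i, (v i : ℂ) * z i)
          / (2 * Real.pi * Complex.I) ^ d)
        * ((|(Matrix.of fun i j => w j i).det| : ℝ) : ℂ)
        / ∏ j, ∑ i, (w j i : ℂ) * z i := by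
  classical
  -- notation
  set g : (Fin d → ℝ) → ℂ :=
    fun ξ => Complex.exp (-2 * Real.pi * Complex.I * ∑ i, (ξ i : ℂ) * z i) with hg
  set a : Fin d → ℂ := fun j => ∑ i, (w j i : ℂ) * z i with ha
  set c : Fin d → ℂ := fun j => -2 * Real.pi * Complex.I * a j with hc
  have hcre : ∀ j, (c j).re < 0 := by
    intro j
    have : (c j).re = 2 * Real.pi * (a j).im := by
      simp [hc, Complex.mul_re, Complex.mul_im]
      try ring
    rw [this]
    have := hz j
    nlinarith [Real.pi_pos]
  have ha0 : ∀ j, a j ≠ 0 := by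
    intro j h
    have h2 : (a j).im < 0 := hz j
    rw [h] at h2
    simp at h2
  -- the matrix and linear map
  set W : Matrix (Fin d) (Fin d) ℝ := Matrix.of fun i j => w j i with hW
  set M : (Fin d → ℝ) →ₗ[ℝ] (Fin d → ℝ) := Matrix.toLin' W with hM
  set Mc : (Fin d → ℝ) →L[ℝ] (Fin d → ℝ) := LinearMap.toContinuousLinearMap M with hMc
  have hMapp : ∀ lam : Fin d → ℝ, M lam = ∑ j, lam j • w j := by
    intro lam
    ext i
    simp [hM, Matrix.toLin'_apply, Matrix.mulVec, dotProduct, hW,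
      Finset.sum_apply, mul_comm]
  set φ : (Fin d → ℝ) → (Fin d → ℝ) := fun lam => v + M lam with hφ
  set s : Set (Fin d → ℝ) := Set.univ.pi (fun _ => Set.Ici (0:ℝ)) with hs
  have hsm : MeasurableSet s := MeasurableSet.univ_pi (fun _ => measurableSet_Ici)
  have hKs : K = φ '' s := by
    rw [hK]
    ext x
    constructor
    · rintro ⟨lam, hlam, rfl⟩
      exact ⟨lam, fun j _ => hlam j, by simp only [hφ]; rw [hMapp]⟩
    · rintro ⟨lam, hlam, rfl⟩
      exact ⟨lam, fun j => hlam j (Set.mem_univ j), by simp only [hφ]; rw [hMapp]⟩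
  -- injectivity
  have hinj : Set.InjOn φ s := by
    intro x _ y _ hxy
    have : M (x - y) = 0 := by
      have : v + M x = v + M y := hxy
      have h2 : M x = M y := by exact add_left_cancel this
      rw [map_sub, h2, sub_self]
    rw [hMapp] at this
    have hxy' : ∀ j, (x - y) j = 0 := Fintype.linearIndependent_iff.mp hw _ (by
      simpa using this)
    funext j
    have := hxy' j
    simp [Pi.sub_apply, sub_eq_zero] at this
    exact this
  -- derivative
  have hder : ∀ x ∈ s, HasFDerivWithinAt φ Mc s x := by
    intro x _
    exact (Mc.hasFDerivAt.const_add v).hasFDerivWithinAt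
  have hdet : Mc.det = W.det := by
    rw [ContinuousLinearMap.det]
    simp [hMc, hM, LinearMap.det_toLin']
  -- expansion of the integrand
  have expand : ∀ lam : Fin d → ℝ,
      g (φ lam) = g v * ∏ j, Complex.exp (c j * lam j) := by
    intro lam
    have h1 : ∀ i, ((φ lam) i : ℂ) = (v i : ℂ) + ∑ j, (lam j : ℂ) * (w j i : ℂ) := by
      intro i
      have : (φ lam) i = v i + ∑ j, lam j * w j i := by
        simp [hφ, hMapp, Finset.sum_apply]
      rw [this]
      push_cast
      ring
    have h2 : (∑ i, ((φ lam) i : ℂ) * z i)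
        = (∑ i, (v i : ℂ) * z i) + ∑ j, (lam j : ℂ) * a j := by
      simp only [h1, add_mul, Finset.sum_add_distrib]
      congr 1
      simp_rw [Finset.sum_mul]
      rw [Finset.sum_comm]
      refine Finset.sum_congr rfl fun j _ => ?_
      simp only [ha]
      rw [Finset.mul_sum]
      refine Finset.sum_congr rfl fun i _ => ?_
      ring
    have h3 : -2 * (Real.pi:ℂ) * Complex.I * ∑ j, (lam j : ℂ) * a j
        = ∑ j, c j * (lam j : ℂ) := by
      rw [Finset.mul_sum]
      refine Finset.sum_congr rfl fun j _ => ?_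
      simp only [hc]
      ring
    simp only [hg]
    rw [h2, mul_add, Complex.exp_add, h3, Complex.exp_sum]
  -- the one-dimensional pieces
  set f : Fin d → ℝ → ℂ := fun j => (Set.Ici (0:ℝ)).indicator (fun t => Complex.exp (c j * t))
    with hf
  have hfint : ∀ j, Integrable (f j) := by
    intro j
    rw [hf]
    rw [integrable_indicator_iff measurableSet_Ici]
    rw [integrableOn_Ici_iff_integrableOn_Ioi]
    exact cexp_integrableOn_Ioi_aux (hcre j)
  have hfval : ∀ j, ∫ t : ℝ, f j t = -(c j)⁻¹ := by
    intro j
    rw [hf]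
    rw [integral_indicator measurableSet_Ici, integral_Ici_eq_integral_Ioi]
    exact integral_cexp_Ioi_aux (hcre j)
  -- indicator of product set
  have hind : ∀ x : Fin d → ℝ,
      s.indicator (fun x : Fin d → ℝ => ∏ j, Complex.exp (c j * x j)) x
        = ∏ j, f j (x j) := by
    intro x
    by_cases hx : x ∈ s
    · rw [Set.indicator_of_mem hx]
      refine Finset.prod_congr rfl fun j _ => ?_
      simp [hf, Set.indicator_of_mem (hx j (Set.mem_univ j))]
    · rw [Set.indicator_of_notMem hx]
      rw [hs, Set.mem_pi] at hx
      push_neg at hx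
      obtain ⟨j, _, hj⟩ := hx
      refine (Finset.prod_eq_zero (Finset.mem_univ j) ?_).symm
      simp only [hf]
      exact Set.indicator_of_notMem hj _
  have hprodint : Integrable (fun x : Fin d → ℝ => ∏ j, f j (x j)) :=
    Integrable.fintype_prod hfint
  -- integrability of the composed function on s
  have hcompint : IntegrableOn (fun x => |Mc.det| • g (φ x)) s volume := by
    have : IntegrableOn (fun x : Fin d → ℝ => ∏ j, f j (x j)) s volume :=
      hprodint.integrableOn
    have h2 : IntegrableOn
        (fun x : Fin d → ℝ => ∏ j, Complex.exp (c j * x j)) s volume := by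
      refine this.congr_fun (fun x hx => ?_) hsm
      beta_reduce
      rw [← hind x, Set.indicator_of_mem hx]
    have h3 : IntegrableOn (fun x : Fin d → ℝ => |Mc.det| • (g v * ∏ j, Complex.exp (c j * x j)))
        s volume := by
      have := (h2.const_mul (g v)).smul (|Mc.det|)
      exact this.congr (Filter.Eventually.of_forall fun x => by simp [Pi.smul_apply])
    refine IntegrableOn.congr_fun h3 (fun x _ => ?_) hsm
    rw [expand x]
  -- main computation
  have hint : IntegrableOn g K volume := by
    rw [hKs]
    rw [integrableOn_image_iff_integrableOn_abs_det_fderiv_smul volume hsm hder hinj]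
    exact hcompint
  refine ⟨hint, ?_⟩
  rw [hKs, integral_image_eq_integral_abs_det_fderiv_smul volume hsm hder hinj]
  calc ∫ x in s, |Mc.det| • g (φ x)
      = |W.det| • ∫ x in s, g (φ x) := by
        simp_rw [hdet]
        rw [integral_smul]
    _ = |W.det| • (g v * ∫ x in s, ∏ j, Complex.exp (c j * x j)) := by
        congr 1
        rw [← integral_const_mul]
        refine setIntegral_congr_fun hsm fun x _ => ?_
        exact expand x
    _ = |W.det| • (g v * ∏ j, ∫ t : ℝ, f j t) := by
        congr 2
        rw [← integral_indicator hsm]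
        simp_rw [hind]
        exact integral_fintype_prod_eq_prod (ι := Fin d) f
    _ = |W.det| • (g v * ∏ j, -(c j)⁻¹) := by simp_rw [hfval]
    _ = (g v / (2 * Real.pi * Complex.I) ^ d) * ((|W.det| : ℝ) : ℂ) / ∏ j, a j := by
        have h2pi : (2 * (Real.pi:ℂ) * Complex.I) ≠ 0 := by
          simp [Real.pi_ne_zero, Complex.I_ne_zero]
        have : ∀ j, -(c j)⁻¹ = ((2 * Real.pi * Complex.I) * a j)⁻¹ := by
          intro j
          rw [hc]
          rw [← inv_neg]
          congr 1
          ring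
        simp_rw [this]
        rw [Finset.prod_inv_distrib, Finset.prod_mul_distrib, Finset.prod_const,
          Finset.card_univ, Fintype.card_fin]
        rw [mul_inv]
        rw [Complex.real_smul]
        push_cast
        field_simp
end

section
/- Let d ≥ 2, let P ⊂ ℝ^d be a d-dimensional polytope, let α ∈ ℂ \ {0}, and let z ∈ ℂ^d satisfy z₁² + ⋯ + z_d² = α². If 1̂_P(Az) = 0 for every A ∈ SO(d,ℝ) (the real special orthogonal matrices, acting on z ∈ ℂ^d by matrix multiplication with entries viewed as complex numbers), then 1̂_P vanishes identically on S_ℂ(α), i.e., 1̂_P(w) = 0 for every w ∈ ℂ^d with w₁² + ⋯ + w_d² = α². -/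
open MeasureTheory Real

section AuxVanishing

open Complex Matrix


/-- complex Givens rotation acting on a vector -/
def rotVec {d : ℕ} (j k : Fin d) (c s : ℂ) (v : Fin d → ℂ) : Fin d → ℂ :=
  fun i => if i = j then c * v j + s * v k else if i = k then -s * v j + c * v k else v i

lemma sum_split {d : ℕ} {M : Type*} [AddCommMonoid M] {j k : Fin d} (hjk : j ≠ k) (f : Fin d → M) :
    ∑ m, f m = f j + (f k + ∑ m ∈ (Finset.univ.erase j).erase k, f m) := by
  rw [Finset.add_sum_erase _ f (Finset.mem_erase.2 ⟨Ne.symm hjk, Finset.mem_univ k⟩),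
    Finset.add_sum_erase _ f (Finset.mem_univ j)]

lemma rotVec_apply_j {d : ℕ} {j k : Fin d} (c s : ℂ) (v : Fin d → ℂ) :
    rotVec j k c s v j = c * v j + s * v k := by simp [rotVec]

lemma rotVec_apply_k {d : ℕ} {j k : Fin d} (hjk : j ≠ k) (c s : ℂ) (v : Fin d → ℂ) :
    rotVec j k c s v k = -s * v j + c * v k := by simp [rotVec, Ne.symm hjk]

lemma rotVec_apply_other {d : ℕ} {j k i : Fin d} (hij : i ≠ j) (hik : i ≠ k) (c s : ℂ)
    (v : Fin d → ℂ) : rotVec j k c s v i = v i := by simp [rotVec, hij, hik]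

lemma rotVec_sumsq {d : ℕ} {j k : Fin d} (hjk : j ≠ k) {c s : ℂ} (hcs : c ^ 2 + s ^ 2 = 1)
    (v : Fin d → ℂ) : ∑ m, (rotVec j k c s v m) ^ 2 = ∑ m, v m ^ 2 := by
  rw [sum_split hjk (fun m => (rotVec j k c s v m) ^ 2), sum_split hjk (fun m => v m ^ 2)]
  rw [Finset.sum_congr rfl (fun m hm => by
    rw [rotVec_apply_other (Finset.ne_of_mem_erase (Finset.mem_of_mem_erase hm))
      (Finset.ne_of_mem_erase hm)])]
  rw [rotVec_apply_j, rotVec_apply_k hjk]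
  linear_combination (v j ^ 2 + v k ^ 2) * hcs

lemma rotVec_inv {d : ℕ} {j k : Fin d} (hjk : j ≠ k) {c s : ℂ} (hcs : c ^ 2 + s ^ 2 = 1)
    (v : Fin d → ℂ) : rotVec j k c (-s) (rotVec j k c s v) = v := by
  funext i
  by_cases hij : i = j
  · subst hij
    rw [rotVec_apply_j, rotVec_apply_j, rotVec_apply_k hjk]
    linear_combination v i * hcs
  by_cases hik : i = k
  · subst hik
    rw [rotVec_apply_k hjk, rotVec_apply_j, rotVec_apply_k hjk]
    linear_combination v i * hcs
  · rw [rotVec_apply_other hij hik, rotVec_apply_other hij hik]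

lemma exists_theta {c s : ℂ} (hcs : c ^ 2 + s ^ 2 = 1) :
    ∃ θ : ℂ, Complex.cos θ = c ∧ Complex.sin θ = s := by
  have hu : (c + s * I) * (c - s * I) = 1 := by
    have : I ^ 2 = -1 := Complex.I_sq
    linear_combination hcs - s ^ 2 * this
  have hne : c + s * I ≠ 0 := left_ne_zero_of_mul_eq_one hu
  set θ : ℂ := -I * Complex.log (c + s * I) with hθ
  have h1 : Complex.exp (θ * I) = c + s * I := by
    rw [show θ * I = Complex.log (c + s * I) by
      rw [hθ, mul_comm, ← mul_assoc]; simp [Complex.I_mul_I]]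
    exact Complex.exp_log hne
  have h2 : Complex.exp (-θ * I) = c - s * I := by
    rw [neg_mul, Complex.exp_neg, h1]
    exact inv_eq_of_mul_eq_one_right hu
  rw [Complex.exp_mul_I] at h1 h2
  rw [Complex.cos_neg, Complex.sin_neg] at h2
  refine ⟨θ, by linear_combination (h1 + h2) / 2, ?_⟩
  linear_combination (h1 - h2) * (-I / 2) + (Complex.sin θ - s) * Complex.I_sq



lemma norm_cos_le_exp (θ : ℂ) : ‖Complex.cos θ‖ ≤ Real.exp ‖θ‖ := by
  have h : Complex.cos θ = (Complex.exp (θ * I) + Complex.exp (-θ * I)) / 2 := by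
    rw [Complex.exp_mul_I, Complex.exp_mul_I, Complex.cos_neg, Complex.sin_neg]
    ring
  rw [h]
  have e1 : ‖Complex.exp (θ * I)‖ ≤ Real.exp ‖θ‖ := by
    rw [Complex.norm_exp]
    refine Real.exp_le_exp.2 ?_
    calc (θ * I).re ≤ ‖θ * I‖ := Complex.re_le_norm _
    _ = ‖θ‖ := by simp
  have e2 : ‖Complex.exp (-θ * I)‖ ≤ Real.exp ‖θ‖ := by
    rw [Complex.norm_exp]
    refine Real.exp_le_exp.2 ?_
    calc (-θ * I).re ≤ ‖-θ * I‖ := Complex.re_le_norm _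
    _ = ‖θ‖ := by simp
  calc ‖(Complex.exp (θ * I) + Complex.exp (-θ * I)) / 2‖
      ≤ (‖Complex.exp (θ * I)‖ + ‖Complex.exp (-θ * I)‖) / 2 := by
        rw [norm_div]; gcongr; · exact norm_add_le _ _
        · simp
  _ ≤ (Real.exp ‖θ‖ + Real.exp ‖θ‖) / 2 := by gcongr
  _ = Real.exp ‖θ‖ := by ring

lemma norm_sin_le_exp (θ : ℂ) : ‖Complex.sin θ‖ ≤ Real.exp ‖θ‖ := by
  have h : Complex.sin θ = (Complex.exp (θ * I) - Complex.exp (-θ * I)) / (2 * I) := by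
    rw [Complex.exp_mul_I, Complex.exp_mul_I, Complex.cos_neg, Complex.sin_neg]
    field_simp
    ring
  rw [h]
  have e1 : ‖Complex.exp (θ * I)‖ ≤ Real.exp ‖θ‖ := by
    rw [Complex.norm_exp]
    refine Real.exp_le_exp.2 ?_
    calc (θ * I).re ≤ ‖θ * I‖ := Complex.re_le_norm _
    _ = ‖θ‖ := by simp
  have e2 : ‖Complex.exp (-θ * I)‖ ≤ Real.exp ‖θ‖ := by
    rw [Complex.norm_exp]
    refine Real.exp_le_exp.2 ?_
    calc (-θ * I).re ≤ ‖-θ * I‖ := Complex.re_le_norm _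
    _ = ‖θ‖ := by simp
  calc ‖(Complex.exp (θ * I) - Complex.exp (-θ * I)) / (2 * I)‖
      ≤ (‖Complex.exp (θ * I)‖ + ‖Complex.exp (-θ * I)‖) / 2 := by
        rw [norm_div]
        have : ‖(2 * I : ℂ)‖ = 2 := by simp
        rw [this]; gcongr; exact norm_sub_le _ _
  _ ≤ (Real.exp ‖θ‖ + Real.exp ‖θ‖) / 2 := by gcongr
  _ = Real.exp ‖θ‖ := by ring

lemma entire_zero_on_real (g : ℂ → ℂ) (hg : Differentiable ℂ g) (h0 : ∀ t : ℝ, g t = 0)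
    (θ : ℂ) : g θ = 0 := by
  have hA : AnalyticOnNhd ℂ g Set.univ := analyticOnNhd_univ_iff_differentiable.2 hg
  have hfreq : ∃ᶠ ζ in nhdsWithin (0 : ℂ) {(0 : ℂ)}ᶜ, g ζ = 0 := by
    rw [Filter.frequently_iff]
    intro U hU
    rw [Metric.mem_nhdsWithin_iff] at hU
    obtain ⟨ε, hε, hsub⟩ := hU
    refine ⟨((ε / 2 : ℝ) : ℂ), hsub ⟨?_, ?_⟩, h0 _⟩
    · rw [Metric.mem_ball, dist_zero_right]
      simp only [Complex.norm_real, Real.norm_eq_abs, abs_of_pos (half_pos hε)]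
      linarith
    · simp only [Set.mem_compl_iff, Set.mem_singleton_iff]
      exact_mod_cast (ne_of_gt (half_pos hε))
  have := hA.eqOn_zero_of_preconnected_of_frequently_eq_zero isPreconnected_univ
    (Set.mem_univ 0) hfreq
  exact this (Set.mem_univ θ)


set_option maxHeartbeats 1000000 in
lemma diff_param (d : ℕ) (P : Set (Fin d → ℝ)) (hPm : MeasurableSet P)
    (hvol : volume P < ⊤) (R : ℝ) (hR0 : 0 ≤ R) (hR : ∀ x ∈ P, ∀ i, |x i| ≤ R)
    (p q e : Fin d → ℂ) :
    Differentiable ℂ (fun θ : ℂ =>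
      fourierLaplace d P (fun i => Complex.cos θ * p i + Complex.sin θ * q i + e i)) := by
  have hnormc0 : ‖(-2 * Real.pi * Complex.I : ℂ)‖ = 2 * Real.pi := by
    rw [norm_mul, norm_mul, Complex.norm_I, mul_one, Complex.norm_real, Real.norm_eq_abs,
      _root_.abs_of_nonneg Real.pi_nonneg]
    norm_num
  set A : (Fin d → ℝ) → ℂ := fun x => -2 * Real.pi * Complex.I * ∑ j, (x j : ℂ) * p j with hA
  set B : (Fin d → ℝ) → ℂ := fun x => -2 * Real.pi * Complex.I * ∑ j, (x j : ℂ) * q j with hB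
  set C : (Fin d → ℝ) → ℂ := fun x => -2 * Real.pi * Complex.I * ∑ j, (x j : ℂ) * e j with hC
  have key : ∀ (x : Fin d → ℝ) (θ : ℂ),
      (-2 * Real.pi * Complex.I : ℂ) * ∑ j, (x j : ℂ) * (Complex.cos θ * p j + Complex.sin θ * q j + e j)
        = Complex.cos θ * A x + Complex.sin θ * B x + C x := by
    intro x θ
    have h : ∑ j, (x j : ℂ) * (Complex.cos θ * p j + Complex.sin θ * q j + e j)
        = Complex.cos θ * ∑ j, (x j : ℂ) * p j + Complex.sin θ * ∑ j, (x j : ℂ) * q j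
          + ∑ j, (x j : ℂ) * e j := by
      rw [Finset.mul_sum, Finset.mul_sum, ← Finset.sum_add_distrib, ← Finset.sum_add_distrib]
      exact Finset.sum_congr rfl fun j _ => by ring
    rw [h]
    show _ = Complex.cos θ * (-2 * Real.pi * Complex.I * ∑ j, (x j : ℂ) * p j)
      + Complex.sin θ * (-2 * Real.pi * Complex.I * ∑ j, (x j : ℂ) * q j)
      + -2 * Real.pi * Complex.I * ∑ j, (x j : ℂ) * e j
    ring
  have hfun : (fun θ : ℂ =>
      fourierLaplace d P (fun i => Complex.cos θ * p i + Complex.sin θ * q i + e i))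
      = fun θ : ℂ => ∫ x in P, Complex.exp (Complex.cos θ * A x + Complex.sin θ * B x + C x) := by
    funext θ
    unfold fourierLaplace
    exact integral_congr_ae (Filter.Eventually.of_forall fun x => congrArg Complex.exp (key x θ))
  rw [hfun]
  have hcontA : Continuous A := continuous_const.mul (continuous_finset_sum _ fun j _ =>
    (Complex.continuous_ofReal.comp (continuous_apply j)).mul continuous_const)
  have hcontB : Continuous B := continuous_const.mul (continuous_finset_sum _ fun j _ =>
    (Complex.continuous_ofReal.comp (continuous_apply j)).mul continuous_const)
  have hcontC : Continuous C := continuous_const.mul (continuous_finset_sum _ fun j _ =>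
    (Complex.continuous_ofReal.comp (continuous_apply j)).mul continuous_const)
  have sum_bound : ∀ (f : Fin d → ℂ), ∀ x ∈ P, ‖∑ j, (x j : ℂ) * f j‖ ≤ R * ∑ j, ‖f j‖ := by
    intro f x hx
    calc ‖∑ j, (x j : ℂ) * f j‖ ≤ ∑ j, ‖(x j : ℂ) * f j‖ := norm_sum_le _ _
    _ ≤ ∑ j, R * ‖f j‖ := by
        refine Finset.sum_le_sum fun j _ => ?_
        rw [norm_mul, Complex.norm_real, Real.norm_eq_abs]
        exact mul_le_mul_of_nonneg_right (hR x hx j) (norm_nonneg _)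
    _ = R * ∑ j, ‖f j‖ := by rw [Finset.mul_sum]
  obtain ⟨CA, hCA0, hAb⟩ : ∃ CA, 0 ≤ CA ∧ ∀ x ∈ P, ‖A x‖ ≤ CA := by
    refine ⟨2 * Real.pi * (R * ∑ j, ‖p j‖), by positivity, fun x hx => ?_⟩
    show ‖(-2 * Real.pi * Complex.I : ℂ) * ∑ j, (x j : ℂ) * p j‖ ≤ _
    rw [norm_mul, hnormc0]
    exact mul_le_mul_of_nonneg_left (sum_bound p x hx) (by positivity)
  obtain ⟨CB, hCB0, hBb⟩ : ∃ CB, 0 ≤ CB ∧ ∀ x ∈ P, ‖B x‖ ≤ CB := by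
    refine ⟨2 * Real.pi * (R * ∑ j, ‖q j‖), by positivity, fun x hx => ?_⟩
    show ‖(-2 * Real.pi * Complex.I : ℂ) * ∑ j, (x j : ℂ) * q j‖ ≤ _
    rw [norm_mul, hnormc0]
    exact mul_le_mul_of_nonneg_left (sum_bound q x hx) (by positivity)
  obtain ⟨CC, hCC0, hCb⟩ : ∃ CC, 0 ≤ CC ∧ ∀ x ∈ P, ‖C x‖ ≤ CC := by
    refine ⟨2 * Real.pi * (R * ∑ j, ‖e j‖), by positivity, fun x hx => ?_⟩
    show ‖(-2 * Real.pi * Complex.I : ℂ) * ∑ j, (x j : ℂ) * e j‖ ≤ _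
    rw [norm_mul, hnormc0]
    exact mul_le_mul_of_nonneg_left (sum_bound e x hx) (by positivity)
  clear hA hB hC
  intro θ₀
  set K : ℝ := Real.exp (‖θ₀‖ + 1) with hKdef
  have hK0 : 0 < K := Real.exp_pos _
  have hcos : ∀ θ ∈ Metric.ball θ₀ 1, ‖Complex.cos θ‖ ≤ K ∧ ‖Complex.sin θ‖ ≤ K := by
    intro θ hθ
    have h := mem_ball_iff_norm.1 hθ
    have hθn : ‖θ‖ ≤ ‖θ₀‖ + 1 := by
      calc ‖θ‖ = ‖θ₀ + (θ - θ₀)‖ := by ring_nf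
      _ ≤ ‖θ₀‖ + ‖θ - θ₀‖ := norm_add_le _ _
      _ ≤ ‖θ₀‖ + 1 := by linarith
    exact ⟨le_trans (norm_cos_le_exp θ) (Real.exp_le_exp.2 hθn),
      le_trans (norm_sin_le_exp θ) (Real.exp_le_exp.2 hθn)⟩
  have expbd : ∀ x ∈ P, ∀ θ ∈ Metric.ball θ₀ 1,
      ‖Complex.exp (Complex.cos θ * A x + Complex.sin θ * B x + C x)‖
        ≤ Real.exp ((CA + CB) * K + CC) := by
    intro x hx θ hθ
    obtain ⟨hc1, hs1⟩ := hcos θ hθ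
    rw [Complex.norm_exp]
    refine Real.exp_le_exp.2 ?_
    calc (Complex.cos θ * A x + Complex.sin θ * B x + C x).re
        ≤ ‖Complex.cos θ * A x + Complex.sin θ * B x + C x‖ := Complex.re_le_norm _
    _ ≤ ‖Complex.cos θ * A x‖ + ‖Complex.sin θ * B x‖ + ‖C x‖ := norm_add₃_le
    _ = ‖Complex.cos θ‖ * ‖A x‖ + ‖Complex.sin θ‖ * ‖B x‖ + ‖C x‖ := by
        rw [norm_mul (Complex.cos θ) (A x), norm_mul (Complex.sin θ) (B x)]
    _ ≤ K * CA + K * CB + CC := by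
        gcongr <;> [exact hAb x hx; exact hBb x hx; exact hCb x hx]
    _ = (CA + CB) * K + CC := by ring
  have est : ∀ x ∈ P, ∀ θ ∈ Metric.ball θ₀ 1,
      ‖Complex.exp (Complex.cos θ * A x + Complex.sin θ * B x + C x)
        * (-Complex.sin θ * A x + Complex.cos θ * B x)‖
        ≤ Real.exp ((CA + CB) * K + CC) * ((CA + CB) * K) := by
    intro x hx θ hθ
    obtain ⟨hc1, hs1⟩ := hcos θ hθ
    rw [norm_mul]
    refine mul_le_mul (expbd x hx θ hθ) ?_ (norm_nonneg _) (Real.exp_pos _).le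
    calc ‖-Complex.sin θ * A x + Complex.cos θ * B x‖
        ≤ ‖-Complex.sin θ * A x‖ + ‖Complex.cos θ * B x‖ := norm_add_le _ _
    _ = ‖Complex.sin θ‖ * ‖A x‖ + ‖Complex.cos θ‖ * ‖B x‖ := by
        rw [norm_mul (-Complex.sin θ) (A x), norm_mul (Complex.cos θ) (B x), norm_neg]
    _ ≤ K * CA + K * CB := by
        gcongr <;> [exact hAb x hx; exact hBb x hx]
    _ = (CA + CB) * K := by ring
  have mF : ∀ θ : ℂ, AEStronglyMeasurable
      (fun x => Complex.exp (Complex.cos θ * A x + Complex.sin θ * B x + C x))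
      (volume.restrict P) :=
    fun θ => (((continuous_const.mul hcontA).add (continuous_const.mul hcontB)).add
      hcontC).cexp.aestronglyMeasurable
  have mF' : AEStronglyMeasurable
      (fun x => Complex.exp (Complex.cos θ₀ * A x + Complex.sin θ₀ * B x + C x)
        * (-Complex.sin θ₀ * A x + Complex.cos θ₀ * B x)) (volume.restrict P) :=
    (((((continuous_const.mul hcontA).add (continuous_const.mul hcontB)).add hcontC).cexp).mul
      ((continuous_const.mul hcontA).add (continuous_const.mul hcontB))).aestronglyMeasurable
  have hFint : Integrable
      (fun x => Complex.exp (Complex.cos θ₀ * A x + Complex.sin θ₀ * B x + C x))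
      (volume.restrict P) := by
    refine Integrable.mono' (g := fun _ => Real.exp ((CA + CB) * K + CC))
      (integrableOn_const hvol.ne) (mF θ₀) ?_
    exact (ae_restrict_mem hPm).mono fun x hx =>
      expbd x hx θ₀ (Metric.mem_ball_self one_pos)
  have hbd : ∀ᵐ x ∂(volume.restrict P), ∀ θ ∈ Metric.ball θ₀ 1,
      ‖Complex.exp (Complex.cos θ * A x + Complex.sin θ * B x + C x)
        * (-Complex.sin θ * A x + Complex.cos θ * B x)‖
        ≤ Real.exp ((CA + CB) * K + CC) * ((CA + CB) * K) :=
    (ae_restrict_mem hPm).mono fun x hx θ hθ => est x hx θ hθ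
  have hderiv : ∀ᵐ x ∂(volume.restrict P), ∀ θ ∈ Metric.ball θ₀ 1,
      HasDerivAt (fun θ : ℂ => Complex.exp (Complex.cos θ * A x + Complex.sin θ * B x + C x))
        (Complex.exp (Complex.cos θ * A x + Complex.sin θ * B x + C x)
          * (-Complex.sin θ * A x + Complex.cos θ * B x)) θ := by
    refine Filter.Eventually.of_forall fun x θ _ => ?_
    have h1 : HasDerivAt (fun θ : ℂ => Complex.cos θ * A x + Complex.sin θ * B x + C x)
        (-Complex.sin θ * A x + Complex.cos θ * B x) θ :=
      (((Complex.hasDerivAt_cos θ).mul_const (A x)).add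
        ((Complex.hasDerivAt_sin θ).mul_const (B x))).add_const (C x)
    exact h1.cexp
  have main := hasDerivAt_integral_of_dominated_loc_of_deriv_le
    (F := fun θ x => Complex.exp (Complex.cos θ * A x + Complex.sin θ * B x + C x))
    (F' := fun θ x => Complex.exp (Complex.cos θ * A x + Complex.sin θ * B x + C x)
      * (-Complex.sin θ * A x + Complex.cos θ * B x))
    (bound := fun _ => Real.exp ((CA + CB) * K + CC) * ((CA + CB) * K))
    (x₀ := θ₀) (μ := volume.restrict P)
    (Metric.ball_mem_nhds θ₀ one_pos) (Filter.Eventually.of_forall mF) hFint mF' hbd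
    (integrableOn_const hvol.ne) hderiv
  exact main.2.differentiableAt

lemma rot2_sound (c s : ℝ) (hcs : c ^ 2 + s ^ 2 = 1) :
    (!![c, s; -s, c])ᵀ * !![c, s; -s, c] = 1 := by
  have ht : (!![c, s; -s, c])ᵀ = !![c, -s; s, c] := by
    ext i m; fin_cases i <;> fin_cases m <;> rfl
  rw [ht]
  ext i m
  fin_cases i <;> fin_cases m <;>
    simp [Matrix.mul_apply, Fin.sum_univ_two, Matrix.one_apply] <;> nlinarith [hcs]

lemma rot2_det (c s : ℝ) (hcs : c ^ 2 + s ^ 2 = 1) : (!![c, s; -s, c]).det = 1 := by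
  rw [Matrix.det_fin_two_of]; nlinarith [hcs]

lemma exists_givens (d : ℕ) (hd : 2 ≤ d) (j k : Fin d) (hjk : j ≠ k) (c s : ℝ)
    (hcs : c ^ 2 + s ^ 2 = 1) :
    ∃ G : Matrix (Fin d) (Fin d) ℝ, Gᵀ * G = 1 ∧ G.det = 1 ∧
      ∀ v : Fin d → ℂ, (G.map ((↑) : ℝ → ℂ)).mulVec v = rotVec j k (c : ℂ) (s : ℂ) v := by
  have h2 : 2 + (d - 2) = d := by omega
  set i0 : Fin d := ⟨0, by omega⟩ with hi0
  set i1 : Fin d := ⟨1, by omega⟩ with hi1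
  have hi01 : i0 ≠ i1 := by simp [hi0, hi1, Fin.ext_iff]
  set pm : Equiv.Perm (Fin d) := (Equiv.swap i1 ((Equiv.swap i0 j) k)) * (Equiv.swap i0 j) with hpm
  have hpmj : pm j = i0 := by
    rw [hpm]
    simp only [Equiv.Perm.mul_apply, Equiv.swap_apply_right]
    refine Equiv.swap_apply_of_ne_of_ne hi01 ?_
    intro h
    have : k = (Equiv.swap i0 j) i0 := by
      have := congrArg (Equiv.swap i0 j) h
      simpa using this.symm
    simp [Equiv.swap_apply_left] at this
    exact hjk this.symm
  have hpmk : pm k = i1 := by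
    rw [hpm]
    simp only [Equiv.Perm.mul_apply, Equiv.swap_apply_right]
  set e : Fin d ≃ Fin 2 ⊕ Fin (d - 2) :=
    pm.trans ((finCongr h2.symm).trans finSumFinEquiv.symm) with he
  have hcast0 : (finCongr h2.symm) i0 = Fin.castAdd (d - 2) (0 : Fin 2) := by
    ext; simp [hi0]
  have hcast1 : (finCongr h2.symm) i1 = Fin.castAdd (d - 2) (1 : Fin 2) := by
    ext; simp [hi1]
  have hej : e j = Sum.inl 0 := by
    rw [he]
    simp only [Equiv.trans_apply, hpmj, hcast0, finSumFinEquiv_symm_apply_castAdd]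
  have hek : e k = Sum.inl 1 := by
    rw [he]
    simp only [Equiv.trans_apply, hpmk, hcast1, finSumFinEquiv_symm_apply_castAdd]
  set N : Matrix (Fin 2 ⊕ Fin (d - 2)) (Fin 2 ⊕ Fin (d - 2)) ℝ :=
    Matrix.fromBlocks !![c, s; -s, c] 0 0 1 with hN
  refine ⟨N.submatrix e e, ?_, ?_, ?_⟩
  · rw [Matrix.transpose_submatrix, Matrix.submatrix_mul_equiv, hN,
      Matrix.fromBlocks_transpose, Matrix.fromBlocks_multiply]
    simp only [Matrix.transpose_zero, Matrix.transpose_one, Matrix.mul_zero, Matrix.zero_mul,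
      Matrix.mul_one, Matrix.one_mul, add_zero, zero_add, rot2_sound c s hcs]
    rw [Matrix.fromBlocks_one, Matrix.submatrix_one_equiv]
  · rw [Matrix.det_submatrix_equiv_self, hN, Matrix.det_fromBlocks_zero₂₁,
      rot2_det c s hcs, Matrix.det_one, mul_one]
  · intro v
    funext i
    have hsum : ((N.submatrix e e).map ((↑) : ℝ → ℂ)).mulVec v i
        = ∑ m' : Fin 2 ⊕ Fin (d - 2), ((N (e i) m' : ℝ) : ℂ) * v (e.symm m') := by
      rw [Matrix.mulVec, dotProduct]
      exact Fintype.sum_equiv e _ _ fun m => by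
        simp [Matrix.map_apply, Matrix.submatrix_apply]
    rw [hsum, Fintype.sum_sum_type, Fin.sum_univ_two]
    have hsj : e.symm (Sum.inl 0) = j := by rw [← hej, Equiv.symm_apply_apply]
    have hsk : e.symm (Sum.inl 1) = k := by rw [← hek, Equiv.symm_apply_apply]
    by_cases hij : i = j
    · subst hij
      rw [hej]
      simp only [hN, Matrix.fromBlocks_apply₁₁, Matrix.fromBlocks_apply₁₂, Matrix.zero_apply,
        hsj, hsk]
      simp [rotVec, Matrix.cons_val_zero, Matrix.cons_val_one]
    by_cases hik : i = k
    · subst hik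
      rw [hek]
      simp only [hN, Matrix.fromBlocks_apply₁₁, Matrix.fromBlocks_apply₁₂, Matrix.zero_apply,
        hsj, hsk]
      simp [rotVec, Ne.symm hjk]
    · obtain ⟨t, ht⟩ : ∃ t, e i = Sum.inr t := by
        rcases hei : e i with a | t
        · exfalso
          fin_cases a
          · exact hij (e.injective (hei.trans hej.symm))
          · exact hik (e.injective (hei.trans hek.symm))
        · exact ⟨t, rfl⟩
      rw [ht]
      simp only [hN, Matrix.fromBlocks_apply₂₁, Matrix.fromBlocks_apply₂₂, Matrix.zero_apply,
        Matrix.one_apply]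
      have hsi : e.symm (Sum.inr t) = i := by rw [← ht, Equiv.symm_apply_apply]
      rw [rotVec]
      simp only [hij, hik, if_false]
      simp [hsi, apply_ite ((↑) : ℝ → ℂ), Finset.sum_ite_eq]

lemma key_vanish (d : ℕ) (hd : 2 ≤ d) (P : Set (Fin d → ℝ)) (hPm : MeasurableSet P)
    (hvol : volume P < ⊤) (R : ℝ) (hR0 : 0 ≤ R) (hR : ∀ x ∈ P, ∀ i, |x i| ≤ R)
    (v : Fin d → ℂ) (j k : Fin d) (hjk : j ≠ k) (c s : ℂ) (hcs : c ^ 2 + s ^ 2 = 1)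
    (hZ : ∀ A : Matrix (Fin d) (Fin d) ℝ, A.transpose * A = 1 → A.det = 1 →
      fourierLaplace d P ((A.map ((↑) : ℝ → ℂ)).mulVec v) = 0) :
    ∀ A : Matrix (Fin d) (Fin d) ℝ, A.transpose * A = 1 → A.det = 1 →
      fourierLaplace d P ((A.map ((↑) : ℝ → ℂ)).mulVec (rotVec j k c s v)) = 0 := by
  intro A hA1 hA2
  set B : Matrix (Fin d) (Fin d) ℂ := A.map ((↑) : ℝ → ℂ) with hB
  set p : Fin d → ℂ := fun i => B i j * v j + B i k * v k with hp
  set q : Fin d → ℂ := fun i => B i j * v k - B i k * v j with hq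
  set ev : Fin d → ℂ := fun i => ∑ m ∈ (Finset.univ.erase j).erase k, B i m * v m with hev
  have claim1 : ∀ c' s' : ℂ, B.mulVec (rotVec j k c' s' v)
      = fun i => c' * p i + s' * q i + ev i := by
    intro c' s'
    funext i
    show ∑ m, B i m * (rotVec j k c' s' v) m = _
    rw [sum_split hjk (fun m => B i m * rotVec j k c' s' v m), rotVec_apply_j,
      rotVec_apply_k hjk,
      Finset.sum_congr rfl (fun m hm => by
        rw [rotVec_apply_other (Finset.ne_of_mem_erase (Finset.mem_of_mem_erase hm))
          (Finset.ne_of_mem_erase hm)])]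
    have hpi : p i = B i j * v j + B i k * v k := rfl
    have hqi : q i = B i j * v k - B i k * v j := rfl
    have hevi : ev i = ∑ m ∈ (Finset.univ.erase j).erase k, B i m * v m := rfl
    rw [hpi, hqi, hevi]
    ring
  have hmap : ∀ (M N : Matrix (Fin d) (Fin d) ℝ),
      (M * N).map ((↑) : ℝ → ℂ) = M.map ((↑) : ℝ → ℂ) * N.map ((↑) : ℝ → ℂ) := by
    intro M N
    ext i m
    rw [Matrix.map_apply, Matrix.mul_apply, Matrix.mul_apply]
    push_cast
    exact Finset.sum_congr rfl fun x _ => by rw [Matrix.map_apply, Matrix.map_apply]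
  have hreal : ∀ t : ℝ, fourierLaplace d P
      (fun i => Complex.cos (t : ℂ) * p i + Complex.sin (t : ℂ) * q i + ev i) = 0 := by
    intro t
    obtain ⟨G, hG1, hG2, hG3⟩ := exists_givens d hd j k hjk (Real.cos t) (Real.sin t)
      (by nlinarith [Real.sin_sq_add_cos_sq t])
    have h4 : (fun i => Complex.cos (t : ℂ) * p i + Complex.sin (t : ℂ) * q i + ev i)
        = B.mulVec ((G.map ((↑) : ℝ → ℂ)).mulVec v) := by
      rw [hG3 v, claim1]
      funext i
      rw [Complex.ofReal_cos, Complex.ofReal_sin]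
    rw [h4, Matrix.mulVec_mulVec, hB, ← hmap]
    refine hZ (A * G) ?_ ?_
    · show (A * G)ᵀ * (A * G) = 1
      rw [Matrix.transpose_mul, Matrix.mul_assoc, ← Matrix.mul_assoc Aᵀ A G, hA1,
        Matrix.one_mul, hG1]
    · rw [Matrix.det_mul, hA2, hG2, one_mul]
  obtain ⟨θ, hθc, hθs⟩ := exists_theta hcs
  have hzero := entire_zero_on_real _
    (diff_param d P hPm hvol R hR0 hR p q ev)
    hreal θ
  rw [hθc, hθs] at hzero
  show fourierLaplace d P (B.mulVec (rotVec j k c s v)) = 0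
  rw [claim1 c s]
  exact hzero

def StepRel {d : ℕ} (v w : Fin d → ℂ) : Prop :=
  ∃ j k : Fin d, ∃ c s : ℂ, j ≠ k ∧ c ^ 2 + s ^ 2 = 1 ∧ w = rotVec j k c s v


lemma reach_canon (d : ℕ) (α : ℂ) (hα : α ≠ 0) (i0 i1 : Fin d) (hi01 : i0 ≠ i1) :
    ∀ n (v : Fin d → ℂ), (Finset.univ.filter (fun i => v i ≠ 0)).card ≤ n →
    ∑ j, v j ^ 2 = α ^ 2 →
    Relation.ReflTransGen (StepRel (d := d)) v (fun i => if i = i0 then α else 0) := by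
  have hα2 : α ^ 2 ≠ 0 := pow_ne_zero 2 hα
  intro n
  induction n with
  | zero =>
    intro v hcard hsum
    exfalso
    rw [Nat.le_zero, Finset.card_eq_zero, Finset.filter_eq_empty_iff] at hcard
    have hz : ∑ j, v j ^ 2 = (0 : ℂ) := Finset.sum_eq_zero fun m _ => by
      have h0 : ¬ v m ≠ 0 := hcard (Finset.mem_univ m)
      push_neg at h0
      rw [h0]; ring
    exact hα2 (hsum.symm.trans hz)
  | succ n ih =>
    intro v hcard hsum
    by_cases hc1 : (Finset.univ.filter (fun i => v i ≠ 0)).card ≤ 1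
    · -- at most one nonzero coordinate
      obtain ⟨j, hj⟩ : ∃ j, v j ≠ 0 := by
        by_contra h
        push_neg at h
        have hz : ∑ j, v j ^ 2 = (0 : ℂ) := Finset.sum_eq_zero fun m _ => by rw [h m]; ring
        exact hα2 (hsum.symm.trans hz)
      have hjmem : j ∈ Finset.univ.filter (fun i => v i ≠ 0) := by simp [hj]
      have hzero : ∀ m, m ≠ j → v m = 0 := by
        intro m hm
        by_contra hv
        have hmmem : m ∈ Finset.univ.filter (fun i => v i ≠ 0) := by simp [hv]
        have : 1 < (Finset.univ.filter (fun i => v i ≠ 0)).card :=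
          Finset.one_lt_card.2 ⟨m, hmmem, j, hjmem, hm⟩
        omega
      have hvj : v j ^ 2 = α ^ 2 := by
        have h1 : ∑ m, v m ^ 2 = v j ^ 2 := Finset.sum_eq_single j
          (fun m _ hm => by rw [hzero m hm]; ring) (fun h => absurd (Finset.mem_univ j) h)
        rw [← h1, hsum]
      set u : Fin d → ℂ := fun i => if i = i0 then v j else 0 with hu
      have hstep1 : Relation.ReflTransGen (StepRel (d := d)) v u := by
        by_cases hji0 : j = i0
        · have huv : v = u := by
            funext i
            by_cases hii : i = j
            · rw [hii, hu]; simp only []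
              rw [if_pos hji0, hji0]
            · rw [hzero i hii, hu]; simp only []
              rw [if_neg (by rw [← hji0]; exact hii)]
          rw [huv]
        · refine Relation.ReflTransGen.single ⟨i0, j, 0, 1, Ne.symm hji0, by ring, ?_⟩
          funext i
          by_cases hii : i = i0
          · rw [hii, rotVec_apply_j]
            simp [hu, hzero i0 (Ne.symm hji0)]
          by_cases hij : i = j
          · rw [hij, rotVec_apply_k (Ne.symm hji0)]
            simp [hu, hzero i0 (Ne.symm hji0), hji0]
          · rw [rotVec_apply_other hii hij]
            simp [hu, hii, hzero i hij]
      have hcases : v j = α ∨ v j = -α := by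
        have hfac : (v j - α) * (v j + α) = 0 := by linear_combination hvj
        rcases mul_eq_zero.1 hfac with h | h
        · left; linear_combination h
        · right; linear_combination h
      rcases hcases with h | h
      · have huc : u = fun i => if i = i0 then α else 0 := by
          funext i; rw [hu]; simp only []; rw [h]
        rw [← huc]
        exact hstep1
      · refine hstep1.trans (Relation.ReflTransGen.single ⟨i0, i1, -1, 0, hi01, by ring, ?_⟩)
        funext i
        by_cases hii : i = i0
        · rw [hii, rotVec_apply_j]
          simp [hu, h]
        by_cases hii1 : i = i1
        · rw [hii1, rotVec_apply_k hi01]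
          simp [hu, hii, Ne.symm hi01]
        · rw [rotVec_apply_other hii hii1]
          simp [hu, hii]
    · -- at least two nonzero coordinates
      push_neg at hc1
      obtain ⟨j, k, hjk, hvjne, hvkne, hjknz⟩ :
          ∃ j k : Fin d, j ≠ k ∧ v j ≠ 0 ∧ v k ≠ 0 ∧ v j ^ 2 + v k ^ 2 ≠ 0 := by
        rcases eq_or_lt_of_le (show 2 ≤ _ from hc1) with h2 | h3
        · obtain ⟨j, k, hjk, hset⟩ := Finset.card_eq_two.1 h2.symm
          have hjm : j ∈ Finset.univ.filter (fun i => v i ≠ 0) := by rw [hset]; simp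
          have hkm : k ∈ Finset.univ.filter (fun i => v i ≠ 0) := by rw [hset]; simp
          refine ⟨j, k, hjk, by simpa using hjm, by simpa using hkm, ?_⟩
          have hsub : ∑ m, v m ^ 2 = ∑ m ∈ Finset.univ.filter (fun i => v i ≠ 0), v m ^ 2 := by
            refine (Finset.sum_subset (Finset.subset_univ _) fun m _ hm => ?_).symm
            have hvm : v m = 0 := by
              by_contra hv
              exact hm (by simp [hv])
            rw [hvm]; ring
          rw [hsub, hset, Finset.sum_pair hjk] at hsum
          rw [hsum]; exact hα2
        · obtain ⟨t, hts, ht3⟩ := Finset.exists_subset_card_eq h3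
          obtain ⟨x, y, z, hxy, hxz, hyz, hset⟩ := Finset.card_eq_three.1 ht3
          have hmem : ∀ a ∈ ({x, y, z} : Finset (Fin d)), v a ≠ 0 := by
            intro a ha
            have := hts (hset ▸ ha)
            simpa using this
          have hx : v x ≠ 0 := hmem x (by simp)
          have hy : v y ≠ 0 := hmem y (by simp)
          have hz' : v z ≠ 0 := hmem z (by simp)
          by_cases h1 : v x ^ 2 + v y ^ 2 ≠ 0
          · exact ⟨x, y, hxy, hx, hy, h1⟩
          by_cases h2 : v x ^ 2 + v z ^ 2 ≠ 0
          · exact ⟨x, z, hxz, hx, hz', h2⟩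
          by_cases h3' : v y ^ 2 + v z ^ 2 ≠ 0
          · exact ⟨y, z, hyz, hy, hz', h3'⟩
          · exfalso
            push_neg at h1 h2 h3'
            have hx2 : v x ^ 2 = 0 := by linear_combination (h1 + h2 - h3') / 2
            exact hx ((pow_eq_zero_iff (by norm_num)).1 hx2)
      obtain ⟨r, hr⟩ := IsAlgClosed.exists_pow_nat_eq (v j ^ 2 + v k ^ 2) (n := 2) (by norm_num)
      have hrne : r ≠ 0 := by
        intro h; rw [h] at hr; exact hjknz (by rw [← hr]; ring)
      have hkmem : k ∈ Finset.univ.filter (fun i => v i ≠ 0) := by simp [hvkne]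
      have hcs : (v j / r) ^ 2 + (v k / r) ^ 2 = 1 := by
        field_simp
        linear_combination -hr
      have hstep : StepRel v (rotVec j k (v j / r) (v k / r) v) :=
        ⟨j, k, v j / r, v k / r, hjk, hcs, rfl⟩
      have hv1k : rotVec j k (v j / r) (v k / r) v k = 0 := by
        rw [rotVec_apply_k hjk]
        field_simp
        ring
      have hsub : Finset.univ.filter (fun i => rotVec j k (v j / r) (v k / r) v i ≠ 0)
          ⊆ (Finset.univ.filter (fun i => v i ≠ 0)).erase k := by
        intro m hm
        have hm' : rotVec j k (v j / r) (v k / r) v m ≠ 0 := by simpa using hm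
        have hmk : m ≠ k := by
          intro h; rw [h] at hm'; exact hm' hv1k
        rw [Finset.mem_erase]
        refine ⟨hmk, ?_⟩
        by_cases hmj : m = j
        · rw [hmj]; simp [hvjne]
        · rw [rotVec_apply_other hmj hmk] at hm'
          simp [hm']
      have hcard1 : (Finset.univ.filter
          (fun i => rotVec j k (v j / r) (v k / r) v i ≠ 0)).card ≤ n := by
        have h1 := Finset.card_le_card hsub
        rw [Finset.card_erase_of_mem hkmem] at h1
        omega
      have hsum1 : ∑ m, (rotVec j k (v j / r) (v k / r) v) m ^ 2 = α ^ 2 := by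
        rw [rotVec_sumsq hjk hcs v, hsum]
      exact Relation.ReflTransGen.head hstep (ih _ hcard1 hsum1)

end AuxVanishing

theorem vanishing_on_orbit_implies_vanishing_on_variety
    (d : ℕ) (hd : 2 ≤ d)
    (S : Finset (Fin d → ℝ)) (P : Set (Fin d → ℝ))
    (hP : P = convexHull ℝ (S : Set (Fin d → ℝ)))
    (hdim : (interior P).Nonempty)
    (α : ℂ) (hα : α ≠ 0)
    (z : Fin d → ℂ) (hz : ∑ j, z j ^ 2 = α ^ 2)
    (horbit : ∀ A : Matrix (Fin d) (Fin d) ℝ,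
      A.transpose * A = 1 → A.det = 1 →
      fourierLaplace d P ((A.map ((↑) : ℝ → ℂ)).mulVec z) = 0) :
    ∀ w : Fin d → ℂ, ∑ j, w j ^ 2 = α ^ 2 → fourierLaplace d P w = 0 := by
  intro w hw
  have hPc : IsCompact P := by rw [hP]; exact S.finite_toSet.isCompact_convexHull ℝ
  have hPm : MeasurableSet P := hPc.isClosed.measurableSet
  have hvol : MeasureTheory.volume P < ⊤ := hPc.measure_lt_top
  obtain ⟨R0, hR0b⟩ := hPc.isBounded.exists_norm_le
  have hR : ∀ x ∈ P, ∀ i, |x i| ≤ max R0 0 := fun x hx i =>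
    le_trans (le_trans (by rw [← Real.norm_eq_abs]; exact norm_le_pi_norm x i) (hR0b x hx))
      (le_max_left _ _)
  have hR0 : (0 : ℝ) ≤ max R0 0 := le_max_right _ _
  have hstepZ : ∀ v w' : Fin d → ℂ, StepRel v w' →
      (∀ A : Matrix (Fin d) (Fin d) ℝ, A.transpose * A = 1 → A.det = 1 →
        fourierLaplace d P ((A.map ((↑) : ℝ → ℂ)).mulVec v) = 0) →
      (∀ A : Matrix (Fin d) (Fin d) ℝ, A.transpose * A = 1 → A.det = 1 →
        fourierLaplace d P ((A.map ((↑) : ℝ → ℂ)).mulVec w') = 0) := by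
    rintro v w' ⟨j, k, c, s, hjk, hcs, rfl⟩ hZv
    exact key_vanish d hd P hPm hvol _ hR0 hR v j k hjk c s hcs hZv
  have hsym : ∀ v w' : Fin d → ℂ, StepRel v w' → StepRel w' v := by
    rintro v w' ⟨j, k, c, s, hjk, hcs, rfl⟩
    exact ⟨j, k, c, -s, hjk, by linear_combination hcs, (rotVec_inv hjk hcs v).symm⟩
  have htransf : ∀ v w' : Fin d → ℂ, Relation.ReflTransGen StepRel v w' →
      (∀ A : Matrix (Fin d) (Fin d) ℝ, A.transpose * A = 1 → A.det = 1 →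
        fourierLaplace d P ((A.map ((↑) : ℝ → ℂ)).mulVec v) = 0) →
      (∀ A : Matrix (Fin d) (Fin d) ℝ, A.transpose * A = 1 → A.det = 1 →
        fourierLaplace d P ((A.map ((↑) : ℝ → ℂ)).mulVec w') = 0) := by
    intro v w' hvw
    induction hvw with
    | refl => exact id
    | tail _ hbc ih => exact fun hv => hstepZ _ _ hbc (ih hv)
  have htransb : ∀ v w' : Fin d → ℂ, Relation.ReflTransGen StepRel v w' →
      (∀ A : Matrix (Fin d) (Fin d) ℝ, A.transpose * A = 1 → A.det = 1 →
        fourierLaplace d P ((A.map ((↑) : ℝ → ℂ)).mulVec w') = 0) →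
      (∀ A : Matrix (Fin d) (Fin d) ℝ, A.transpose * A = 1 → A.det = 1 →
        fourierLaplace d P ((A.map ((↑) : ℝ → ℂ)).mulVec v) = 0) := by
    intro v w' hvw
    induction hvw with
    | refl => exact id
    | tail _ hbc ih => exact fun hw' => ih (hstepZ _ _ (hsym _ _ hbc) hw')
  have hd0 : (0 : ℕ) < d := by omega
  have hd1 : (1 : ℕ) < d := by omega
  have hi01 : (⟨0, hd0⟩ : Fin d) ≠ ⟨1, hd1⟩ := by simp [Fin.ext_iff]
  have h1 := reach_canon d α hα ⟨0, hd0⟩ ⟨1, hd1⟩ hi01 _ z le_rfl hz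
  have h2 := reach_canon d α hα ⟨0, hd0⟩ ⟨1, hd1⟩ hi01 _ w le_rfl hw
  have hZc := htransf z _ h1 horbit
  have hZw := htransb w _ h2 hZc
  have h3 := hZw 1 (by simp) (by simp)
  rwa [Matrix.map_one ((↑) : ℝ → ℂ) Complex.ofReal_zero Complex.ofReal_one,
    Matrix.one_mulVec] at h3
end
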